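/- Let K be a locally compact Hausdorff space and let X = C₀(K, ℝ) be the Banach space of continuous real-valued functions on K vanishing at infinity, with the supremum norm. Then the following are equivalent: (a) every point of ext(B_{X*}) is a point of continuity of the identity map I : (B_{X*}, w*) → (B_{X*}, w); (b) K is a discrete space. -/

import Mathlib

/-!
(b) ⇒ (a): in a discrete `K` finitely supported functions are dense in `C₀(K)`, and splitting off
the mass at a point shows that the extreme points of the dual ball are the functionals `±δ_x`.
If `χ` is the indicator of `{x}`, every `g` in the ball satisfies
`‖g - σ δ_x‖ ≤ 2 |g χ - σ|`, so weak-* convergence to `σ δ_x` inside the ball is norm convergence.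

(a) ⇒ (b): every `δ_x` is extreme. A weak-* cluster point `φ` in the bidual of bumps shrinking to
`x` has `φ δ_x = 1` and `φ δ_y = 0` for `y ≠ x`. As `y ↦ δ_y` is weak-* continuous, continuity of
the identity at `δ_x` makes `y ↦ φ δ_y` continuous at `x`, so `x` is isolated.
-/

open NormedSpace Filter Topology ZeroAtInfty

noncomputable section

/-- `f` is a point of continuity of the identity map
`I : (B_{E*}, w*) → (B_{E*}, w)` between the closed unit ball of the dual of `E`
with the relative weak-* topology and the same set with the relative weak topology. -/
def IsPoC {E : Type*} [NormedAddCommGroup E] [NormedSpace ℝ E] (f : StrongDual ℝ E) : Prop :=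
  ContinuousWithinAt
    (fun g : WeakDual ℝ E => toWeakSpace ℝ (StrongDual ℝ E) (WeakDual.toStrongDual g))
    {g : WeakDual ℝ E | ‖WeakDual.toStrongDual g‖ ≤ 1}
    (StrongDual.toWeakDual f)

open Set Metric

section

variable {E : Type*} [NormedAddCommGroup E] [NormedSpace ℝ E]

theorem isPoC_of_continuousWithinAt {f : StrongDual ℝ E}
    (h : ContinuousWithinAt (fun g : WeakDual ℝ E => WeakDual.toStrongDual g)
      {g : WeakDual ℝ E | ‖WeakDual.toStrongDual g‖ ≤ 1} (StrongDual.toWeakDual f)) :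
    IsPoC f :=
  (toWeakSpaceCLM ℝ (StrongDual ℝ E)).continuous.continuousAt.comp_continuousWithinAt h

theorem isPoC_of_subsingleton [Subsingleton E] (f : StrongDual ℝ E) : IsPoC f :=
  isPoC_of_continuousWithinAt <| tendsto_const_nhds.congr fun _ => Subsingleton.elim _ _

theorem eq_inv_smul_of_mem_extremePoints_closedBall {f e : E} {t : ℝ}
    (hf : f ∈ extremePoints ℝ (closedBall 0 1)) (ht : 0 < t) (he : ‖e‖ ≤ t)
    (hfe : ‖f - e‖ ≤ 1 - t) : f = t⁻¹ • e := by
  rcases (show t ≤ 1 by linarith [norm_nonneg (f - e)]).lt_or_eq with ht1 | rfl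
  · have hmem : ∀ v : E, ‖v‖ ≤ 1 → v ∈ closedBall (0 : E) 1 := fun v hv => by simpa using hv
    refine (hf.2 (hmem _ ?_) (hmem ((1 - t)⁻¹ • (f - e)) ?_)
      ⟨t, 1 - t, ht, by linarith, by ring, ?_⟩).symm
    · rw [norm_smul, Real.norm_of_nonneg (inv_nonneg.2 ht.le)]
      exact inv_mul_le_one_of_le₀ he ht.le
    · rw [norm_smul, Real.norm_of_nonneg (inv_nonneg.2 (by linarith))]
      exact inv_mul_le_one_of_le₀ hfe (by linarith)
    · rw [smul_smul, smul_smul, mul_inv_cancel₀ ht.ne', mul_inv_cancel₀ (by linarith), one_smul,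
        one_smul, add_sub_cancel]
  · rw [sub_self, norm_le_zero_iff, sub_eq_zero] at hfe
    rw [inv_one, one_smul, hfe]

end

namespace ZeroAtInftyContinuousMap

variable {K : Type*} [TopologicalSpace K]

theorem norm_apply_le {β : Type*} [SeminormedAddCommGroup β] (f : C₀(K, β)) (x : K) :
    ‖f x‖ ≤ ‖f‖ :=
  f.toBCF.norm_coe_le_norm x

theorem norm_le_of_forall_le {β : Type*} [SeminormedAddCommGroup β] {f : C₀(K, β)} {C : ℝ}
    (hC : 0 ≤ C) (h : ∀ x, ‖f x‖ ≤ C) : ‖f‖ ≤ C :=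
  (BoundedContinuousFunction.norm_le hC).2 h

def dirac (x : K) : StrongDual ℝ C₀(K, ℝ) :=
  LinearMap.mkContinuous
    { toFun := fun f => f x
      map_add' := fun _ _ => rfl
      map_smul' := fun _ _ => rfl } 1
    fun f => by simpa using norm_apply_le f x

@[simp] theorem dirac_apply (x : K) (f : C₀(K, ℝ)) : dirac x f = f x := rfl

theorem norm_dirac_le (x : K) : ‖dirac x‖ ≤ 1 :=
  LinearMap.mkContinuous_norm_le _ zero_le_one _

theorem continuous_toWeakDual_dirac :
    Continuous fun x : K => StrongDual.toWeakDual (dirac x) :=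
  WeakDual.continuous_of_continuous_eval fun f => f.continuous

/-- `|g u| + |g k| = g (±u ± k)` for suitable signs, and `‖±u ± k‖ ≤ c`. -/
theorem abs_apply_add_abs_apply_le (g : StrongDual ℝ C₀(K, ℝ)) {u k : C₀(K, ℝ)} {c : ℝ}
    (hc : 0 ≤ c) (h : ∀ y, |u y| + |k y| ≤ c) : |g u| + |g k| ≤ ‖g‖ * c := by
  have hsigns : ∀ s t : ℝ, |s| = 1 → |t| = 1 → s * g u + t * g k ≤ ‖g‖ * c := by
    intro s t hs ht
    have hnorm : ‖s • u + t • k‖ ≤ c := norm_le_of_forall_le hc fun y =>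
      calc ‖(s • u + t • k) y‖ = |s * u y + t * k y| := rfl
        _ ≤ |s * u y| + |t * k y| := abs_add_le _ _
        _ ≤ c := by rw [abs_mul, abs_mul, hs, ht, one_mul, one_mul]; exact h y
    calc s * g u + t * g k = g (s • u + t • k) := by simp
      _ ≤ ‖g (s • u + t • k)‖ := le_abs_self _
      _ ≤ ‖g‖ * c := (g.le_opNorm _).trans (mul_le_mul_of_nonneg_left hnorm (norm_nonneg g))
  rcases abs_cases (g u) with ⟨hu, -⟩ | ⟨hu, -⟩ <;> rcases abs_cases (g k) with ⟨hk, -⟩ | ⟨hk, -⟩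
  · simpa [hu, hk] using hsigns 1 1 (by simp) (by simp)
  · simpa [hu, hk] using hsigns 1 (-1) (by simp) (by simp)
  · simpa [hu, hk] using hsigns (-1) 1 (by simp) (by simp)
  · simpa [hu, hk] using hsigns (-1) (-1) (by simp) (by simp)

theorem exists_bump [RegularSpace K] [LocallyCompactSpace K] {U : Set K} (hU : IsOpen U) {x : K}
    (hx : x ∈ U) :
    ∃ u : C₀(K, ℝ), u x = 1 ∧ (∀ y, u y ∈ Icc (0 : ℝ) 1) ∧ ∀ y ∉ U, u y = 0 := by
  obtain ⟨f, hf1, hf0, hfc, hficc⟩ := exists_continuous_one_zero_of_isCompact isCompact_singleton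
    hU.isClosed_compl (disjoint_singleton_left.mpr (not_not.mpr hx))
  exact ⟨⟨f, hfc.is_zero_at_infty⟩, hf1 rfl, hficc, fun y hy => hf0 hy⟩

theorem norm_le_one_of_mem_Icc {u : C₀(K, ℝ)} (hu : ∀ y, u y ∈ Icc (0 : ℝ) 1) : ‖u‖ ≤ 1 :=
  norm_le_of_forall_le zero_le_one fun y => by
    rw [Real.norm_of_nonneg (hu y).1]; exact (hu y).2

section Bump

variable [RegularSpace K] [LocallyCompactSpace K] {x : K} {g : StrongDual ℝ C₀(K, ℝ)}

/-- Split `h = h (1 - u) + h u` with `u` a bump supported where `|h| < δ`: then `u ± h (1 - u)`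
lies in the unit ball, which forces `g (h (1 - u)) = 0`, while `|g (h u)| ≤ δ`. -/
theorem apply_eq_zero_of_apply_bump_eq_one (hg : ‖g‖ ≤ 1)
    (hbump : ∀ u : C₀(K, ℝ), u x = 1 → (∀ y, u y ∈ Icc (0 : ℝ) 1) → g u = 1)
    {h : C₀(K, ℝ)} (hx : h x = 0) : g h = 0 := by
  refine abs_nonpos_iff.mp (le_of_forall_pos_le_add fun δ hδ => ?_)
  have hV : IsOpen {y | |h y| < δ} := isOpen_lt (continuous_abs.comp h.continuous) continuous_const
  obtain ⟨u, hux, huIcc, hu0⟩ := exists_bump hV (show |h x| < δ by simpa [hx])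
  have hk : g (h - h * u) = 0 := by
    have := abs_apply_add_abs_apply_le g (u := ‖h‖ • u) (k := h - h * u) (norm_nonneg h)
      fun y => by
        have h1 := huIcc y
        have h2 : |h y| ≤ ‖h‖ := norm_apply_le h y
        simp only [smul_apply, coe_sub, coe_mul, Pi.sub_apply, Pi.mul_apply, smul_eq_mul,
          abs_mul, abs_norm, abs_of_nonneg h1.1, ← mul_one_sub, abs_of_nonneg (sub_nonneg.2 h1.2)]
        nlinarith [h1.1, h1.2, abs_nonneg (h y)]
    rw [map_smul, hbump u hux huIcc, smul_eq_mul, mul_one, abs_norm] at this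
    exact abs_nonpos_iff.mp (by nlinarith [norm_nonneg h])
  have hhu : ‖h * u‖ ≤ δ := norm_le_of_forall_le hδ.le fun y => by
    rw [coe_mul, Pi.mul_apply, norm_mul, Real.norm_eq_abs, Real.norm_of_nonneg (huIcc y).1]
    by_cases hy : |h y| < δ
    · exact (mul_le_of_le_one_right (abs_nonneg _) (huIcc y).2).trans hy.le
    · simp [hu0 y hy, hδ.le]
  calc |g h| = |g (h * u)| := by
        rw [← sub_add_cancel h (h * u), map_add, hk, zero_add, sub_add_cancel]
    _ ≤ ‖g‖ * ‖h * u‖ := g.le_opNorm _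
    _ ≤ 0 + δ := by nlinarith [norm_nonneg (h * u), norm_nonneg g]

theorem eq_dirac_of_apply_bump_eq_one (hg : ‖g‖ ≤ 1)
    (hbump : ∀ u : C₀(K, ℝ), u x = 1 → (∀ y, u y ∈ Icc (0 : ℝ) 1) → g u = 1) :
    g = dirac x := by
  obtain ⟨u, hux, huIcc, -⟩ := exists_bump isOpen_univ (mem_univ x)
  ext h
  have hzero := apply_eq_zero_of_apply_bump_eq_one hg hbump (h := h - h x • u) (by simp [hux])
  rw [map_sub, map_smul, hbump u hux huIcc, smul_eq_mul, mul_one, sub_eq_zero] at hzero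
  rw [hzero, dirac_apply]

variable (x) in
theorem dirac_mem_extremePoints :
    dirac x ∈ extremePoints ℝ (closedBall (0 : StrongDual ℝ C₀(K, ℝ)) 1) := by
  refine ⟨(mem_closedBall_zero_iff (a := dirac x)).2 (norm_dirac_le x),
    fun g₁ hg₁ g₂ hg₂ ⟨a, b, ha, hb, hab, hsum⟩ => ?_⟩
  replace hg₁ : ‖g₁‖ ≤ 1 := (mem_closedBall_zero_iff (a := g₁)).1 hg₁
  replace hg₂ : ‖g₂‖ ≤ 1 := (mem_closedBall_zero_iff (a := g₂)).1 hg₂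
  refine eq_dirac_of_apply_bump_eq_one hg₁ fun u hux huIcc => ?_
  have hle : ∀ g : StrongDual ℝ C₀(K, ℝ), ‖g‖ ≤ 1 → g u ≤ 1 := fun g hg =>
    (le_abs_self _).trans ((g.le_opNorm u).trans
      (mul_le_one₀ hg (norm_nonneg u) (norm_le_one_of_mem_Icc huIcc)))
  have hcomb : a * g₁ u + b * g₂ u = 1 := by simpa [hux] using congrArg (· u) hsum
  nlinarith [hle g₁ hg₁, hle g₂ hg₂]

end Bump

section Bidual

variable [T1Space K] [RegularSpace K] [LocallyCompactSpace K]

/-- `φ` is a weak-* cluster point in the bidual of bumps concentrating at `x`; it plays the role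
of the functional `μ ↦ μ {x}` on measures. -/
theorem exists_bidual_dirac (x : K) :
    ∃ φ : StrongDual ℝ (StrongDual ℝ C₀(K, ℝ)), φ (dirac x) = 1 ∧ ∀ y ≠ x, φ (dirac y) = 0 := by
  let bumps : Set K → Set C₀(K, ℝ) := fun U => {u | u x = 1 ∧ ‖u‖ ≤ 1 ∧ ∀ y ∉ U, u y = 0}
  have hmono : Monotone bumps := fun U V hUV u ⟨hux, hu1, hu0⟩ =>
    ⟨hux, hu1, fun y hy => hu0 y fun hyU => hy (hUV hyU)⟩
  have hne : ((𝓝 x).lift' bumps).NeBot := (lift'_neBot_iff hmono).2 fun U hU => by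
    obtain ⟨V, hVU, hV, hxV⟩ := mem_nhds_iff.1 hU
    obtain ⟨u, hux, huIcc, hu0⟩ := exists_bump hV hxV
    exact ⟨u, hux, norm_le_one_of_mem_Icc huIcc, fun y hy => hu0 y fun hyV => hy (hVU hyV)⟩
  let 𝒰 : Ultrafilter C₀(K, ℝ) := .of ((𝓝 x).lift' bumps)
  have h𝒰 : ∀ U ∈ 𝓝 x, bumps U ∈ 𝒰 := fun U hU => Ultrafilter.of_le _ (mem_lift' hU)
  let ι : C₀(K, ℝ) → WeakDual ℝ (StrongDual ℝ C₀(K, ℝ)) := fun u =>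
    StrongDual.toWeakDual (inclusionInDoubleDual ℝ _ u)
  have hcompact := WeakDual.isCompact_closedBall (𝕜 := ℝ) (E := StrongDual ℝ C₀(K, ℝ)) 0 1
  obtain ⟨φ, -, hφ⟩ := hcompact.ultrafilter_le_nhds (𝒰.map ι) <| by
    rw [Ultrafilter.coe_map, le_principal_iff, mem_map]
    filter_upwards [h𝒰 univ univ_mem] with u hu
    exact mem_closedBall_zero_iff.2 ((double_dual_bound ℝ _ u).trans hu.2.1)
  have hι : Tendsto ι 𝒰 (𝓝 φ) := hφ
  have hlim : ∀ g, Tendsto (fun u : C₀(K, ℝ) => g u) 𝒰 (𝓝 (φ g)) := fun g =>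
    ((WeakDual.eval_continuous g).tendsto φ).comp hι
  refine ⟨WeakDual.toStrongDual φ, ?_, fun y hy => ?_⟩
  · refine tendsto_nhds_unique (hlim (dirac x)) (tendsto_const_nhds.congr' ?_)
    filter_upwards [h𝒰 univ univ_mem] with u hu using hu.1.symm
  · refine tendsto_nhds_unique (hlim (dirac y)) (tendsto_const_nhds.congr' ?_)
    filter_upwards [h𝒰 {y}ᶜ (isOpen_compl_singleton.mem_nhds hy.symm)] with u hu
    exact (hu.2.2 y (not_not.2 rfl)).symm

theorem isOpen_singleton_of_isPoC_dirac {x : K} (hx : IsPoC (dirac x)) : IsOpen {x} := by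
  obtain ⟨φ, hφx, hφy⟩ := exists_bidual_dirac x
  have hcont : ContinuousAt (fun y => φ (dirac y)) x := by
    have h := hx.tendsto.comp (tendsto_nhdsWithin_iff.2
      ⟨continuous_toWeakDual_dirac.tendsto x, .of_forall norm_dirac_le⟩)
    exact ((WeakBilin.eval_continuous (topDualPairing ℝ _).flip φ).tendsto _).comp h
  rw [isOpen_iff_mem_nhds]
  rintro _ rfl
  filter_upwards [hcont.eventually_ne (hφx.trans_ne one_ne_zero)] with y hy
  by_contra hyx
  exact hy (hφy y hyx)

end Bidual

section Isolated

variable {x : K} {χ : C₀(K, ℝ)}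

theorem norm_sub_smul_dirac_le (hχx : χ x = 1) (hχ : ∀ y ≠ x, χ y = 0)
    (f : StrongDual ℝ C₀(K, ℝ)) : ‖f - f χ • dirac x‖ ≤ ‖f‖ - |f χ| := by
  have hχ1 : ‖χ‖ ≤ 1 := norm_le_of_forall_le zero_le_one fun y => by
    rcases eq_or_ne y x with rfl | hy
    · simp [hχx]
    · simp [hχ y hy]
  refine ContinuousLinearMap.opNorm_le_bound _ ?_ fun h => ?_
  · have := (f.le_opNorm χ).trans (mul_le_of_le_one_right (norm_nonneg f) hχ1)
    rw [Real.norm_eq_abs] at this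
    linarith
  -- `‖h‖ • χ` and `h - h x • χ` have disjoint supports
  have key := abs_apply_add_abs_apply_le f (u := ‖h‖ • χ) (k := h - h x • χ) (norm_nonneg h)
    fun y => by
      rcases eq_or_ne y x with rfl | hy
      · simp [hχx]
      · simpa [hχ y hy] using norm_apply_le h y
  rw [map_smul, smul_eq_mul, abs_mul, abs_norm] at key
  have hval : (f - f χ • dirac x) h = f (h - h x • χ) := by simp; ring
  rw [Real.norm_eq_abs, hval]
  linarith

theorem isPoC_smul_dirac (hχx : χ x = 1) (hχ : ∀ y ≠ x, χ y = 0) {σ : ℝ} (hσ : |σ| = 1) :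
    IsPoC (σ • dirac x) := by
  have hest : ∀ g : StrongDual ℝ C₀(K, ℝ), ‖g‖ ≤ 1 → ‖g - σ • dirac x‖ ≤ 2 * |g χ - σ| := by
    intro g hg
    have h1 := norm_sub_smul_dirac_le hχx hχ g
    have h2 : ‖g χ • dirac x - σ • dirac x‖ ≤ |g χ - σ| := by
      rw [show g χ • dirac x - σ • dirac x = (g χ - σ) • dirac x by module]
      calc ‖(g χ - σ) • dirac x‖ ≤ ‖g χ - σ‖ * ‖dirac x‖ := ContinuousLinearMap.opNorm_smul_le _ _
        _ ≤ |g χ - σ| := mul_le_of_le_one_right (abs_nonneg _) (norm_dirac_le x)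
    have h3 := abs_sub_abs_le_abs_sub σ (g χ)
    rw [hσ, abs_sub_comm] at h3
    linarith [norm_sub_le_norm_sub_add_norm_sub g (g χ • dirac x) (σ • dirac x)]
  refine isPoC_of_continuousWithinAt ?_
  rw [ContinuousWithinAt, tendsto_iff_norm_sub_tendsto_zero]
  have hχlim : Tendsto (fun g : WeakDual ℝ C₀(K, ℝ) => g χ)
      (𝓝 (StrongDual.toWeakDual (σ • dirac x))) (𝓝 σ) := by
    have := (WeakDual.eval_continuous χ).tendsto (StrongDual.toWeakDual (σ • dirac x))
    rwa [StrongDual.toWeakDual_apply, _root_.smul_apply, dirac_apply, hχx, smul_eq_mul,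
      mul_one] at this
  refine squeeze_zero' (.of_forall fun _ => norm_nonneg _)
    (eventually_nhdsWithin_of_forall fun g hg => hest _ hg) ?_
  simpa using ((hχlim.sub_const σ).abs.const_mul 2).mono_left nhdsWithin_le_nhds

end Isolated

section Discrete

variable [DiscreteTopology K]

def single (x : K) : C₀(K, ℝ) where
  toFun := indicator {x} 1
  continuous_toFun := continuous_of_discreteTopology
  zero_at_infty' := HasCompactSupport.is_zero_at_infty <|
    .intro isCompact_singleton fun _ hy => indicator_of_notMem hy _

theorem single_apply_self (x : K) : single x x = 1 := indicator_of_mem rfl _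

theorem single_apply_of_ne {x y : K} (h : y ≠ x) : single x y = 0 :=
  indicator_of_notMem (show y ∉ ({x} : Set K) from h) _

theorem exists_finset_norm_sub_sum_single_le (h : C₀(K, ℝ)) {ε : ℝ} (hε : 0 < ε) :
    ∃ F : Finset K, ‖h - ∑ y ∈ F, h y • single y‖ ≤ ε := by
  have hfin : {y | ε ≤ |h y|}.Finite := by
    have := ZeroAtInftyContinuousMapClass.zero_at_infty h (ball_mem_nhds 0 hε)
    rw [cocompact_eq_cofinite, mem_map, mem_cofinite] at this
    exact this.subset fun y hy => by simpa using hy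
  refine ⟨hfin.toFinset, norm_le_of_forall_le hε.le fun z => ?_⟩
  rw [coe_sub, Pi.sub_apply, ← dirac_apply z (∑ _ ∈ _, _), map_sum]
  simp only [map_smul, dirac_apply, smul_eq_mul]
  by_cases hz : ε ≤ |h z|
  · rw [Finset.sum_eq_single_of_mem z (hfin.mem_toFinset.2 hz)
      fun y _ hyz => by rw [single_apply_of_ne (Ne.symm hyz), mul_zero],
      single_apply_self, mul_one, sub_self, norm_zero]
    exact hε.le
  · rw [Finset.sum_eq_zero fun y hy => by
      rw [single_apply_of_ne fun hzy : z = y => hz (hzy ▸ hfin.mem_toFinset.1 hy), mul_zero],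
      sub_zero, Real.norm_eq_abs]
    exact (not_le.1 hz).le

theorem dense_span_range_single :
    Dense (Submodule.span ℝ (range (single (K := K))) : Set C₀(K, ℝ)) := by
  refine Metric.dense_iff.2 fun h ε hε => ?_
  obtain ⟨F, hF⟩ := exists_finset_norm_sub_sum_single_le h (half_pos hε)
  refine ⟨∑ y ∈ F, h y • single y, ?_,
    Submodule.sum_mem _ fun y _ =>
      Submodule.smul_mem _ _ (Submodule.subset_span (mem_range_self y))⟩
  rw [mem_ball, dist_comm, dist_eq_norm]
  linarith

theorem exists_eq_smul_dirac_of_mem_extremePoints [Nonempty K] {f : StrongDual ℝ C₀(K, ℝ)}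
    (hf : f ∈ extremePoints ℝ (closedBall 0 1)) : ∃ x, ∃ σ : ℝ, |σ| = 1 ∧ f = σ • dirac x := by
  have hf1 : ‖f‖ ≤ 1 := (mem_closedBall_zero_iff (a := f)).1 hf.1
  obtain ⟨x, hx⟩ : ∃ x, f (single x) ≠ 0 := by
    by_contra! h
    have hf0 : f = 0 :=
      ContinuousLinearMap.ext_on dense_span_range_single (by rintro _ ⟨x, rfl⟩; simp [h x])
    let x₀ := Classical.arbitrary K
    have : Nontrivial (StrongDual ℝ C₀(K, ℝ)) := ⟨dirac x₀, 0, fun h0 => by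
      simpa [single_apply_self] using congr($h0 (single x₀))⟩
    have hsphere := extremePoints_closedBall_subset_sphere (A := StrongDual ℝ C₀(K, ℝ)) hf
    have hnorm : ‖f‖ = 1 := (mem_sphere_zero_iff_norm (a := f)).1 hsphere
    rw [hf0, ContinuousLinearMap.opNorm_zero] at hnorm
    exact zero_ne_one hnorm
  refine ⟨x, |f (single x)|⁻¹ * f (single x), by simp [abs_mul, hx], ?_⟩
  rw [mul_smul]
  refine eq_inv_smul_of_mem_extremePoints_closedBall (f := f) hf (abs_pos.2 hx) ?_ ?_
  · calc ‖f (single x) • dirac x‖ ≤ ‖f (single x)‖ * ‖dirac x‖ :=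
          ContinuousLinearMap.opNorm_smul_le _ _
      _ ≤ |f (single x)| := mul_le_of_le_one_right (abs_nonneg _) (norm_dirac_le x)
  · linarith [norm_sub_smul_dirac_le (single_apply_self x) (fun _ => single_apply_of_ne) f]

end Discrete

end ZeroAtInftyContinuousMap

open ZeroAtInftyContinuousMap

/-- For a locally compact Hausdorff space `K` and `X = C₀(K, ℝ)`, every
extreme point of `B_{X*}` is a point of continuity of `I : (B_{X*}, w*) → (B_{X*}, w)`
if and only if `K` is discrete. -/
theorem stmt_14 {K : Type*} [TopologicalSpace K] [LocallyCompactSpace K] [T2Space K] :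
    (∀ f ∈ Set.extremePoints ℝ (Metric.closedBall (0 : StrongDual ℝ C₀(K, ℝ)) 1), IsPoC f) ↔
      DiscreteTopology K := by
  constructor
  · intro H
    exact discreteTopology_iff_isOpen_singleton.2 fun x =>
      isOpen_singleton_of_isPoC_dirac (H _ (dirac_mem_extremePoints x))
  · intro _ f hf
    rcases isEmpty_or_nonempty K with hK | hK
    · have : Subsingleton C₀(K, ℝ) := DFunLike.coe_injective.subsingleton
      exact isPoC_of_subsingleton f
    · obtain ⟨x, σ, hσ, rfl⟩ := exists_eq_smul_dirac_of_mem_extremePoints hf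
      exact isPoC_smul_dirac (single_apply_self x) (fun _ => single_apply_of_ne) hσ
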